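/- arXiv:1707.04464 — 2 statements merged into one kernel-verified Lean document; each statement's English description precedes it below -/
import Mathlib

section
/- For a BVGE(α₁, α₂, α₃, λ) random vector (X₁, X₂), P(X₁ = X₂) = α₃/(α₁ + α₂ + α₃); equivalently, the singular component along the diagonal has density f₀(x) = (α₃/(α₁+α₂+α₃)) f_{GE}(x; α₁+α₂+α₃, λ), whose total mass is α₃/(α₁+α₂+α₃). -/
open MeasureTheory ProbabilityTheory Set Filter Real

/-!
Off the null event `U₁ = U₂`, the two coordinates agree exactly when `max U₁ U₂ ≤ U₃`.
Writing `G` for the exponential CDF, `max U₁ U₂` has CDF `G ^ (α₁ + α₂)` by independence, so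
conditioning on `U₃` gives the probability `E[G(U₃) ^ (α₁ + α₂)]`, where `U₃` has CDF `G ^ α₃`.
The superlevel sets of `G ^ a` are half-lines, so by the layer-cake formula this expectation is
`∫₀¹ (1 - t ^ (α₃ / (α₁ + α₂))) dt = α₃ / (α₁ + α₂ + α₃)`.
-/

lemma max_eq_max_iff_of_ne {α : Type*} [LinearOrder α] {a b c : α} (h : a ≠ b) :
    max a c = max b c ↔ max a b ≤ c := by
  rcases h.lt_or_gt with h | h <;> constructor <;> intro hc <;>
    simp_all [max_def] <;> split_ifs at * <;> order

lemma nullSingletonClass_of_continuous_cdf {ν : Measure ℝ} [IsProbabilityMeasure ν]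
    (h : Continuous (cdf ν)) : NullSingletonClass ν :=
  ⟨fun a => by
    rw [← measure_cdf ν, StieltjesFunction.measure_singleton,
      h.continuousWithinAt.leftLim_eq, sub_self, ENNReal.ofReal_zero]⟩

lemma cdf_eq_of_measure_Iic {ν : Measure ℝ} [IsProbabilityMeasure ν] {F : ℝ → ℝ}
    (hF : ∀ x, 0 ≤ F x) (h : ∀ x, ν (Iic x) = ENNReal.ofReal (F x)) : cdf ν = F := by
  ext x
  rw [cdf_eq_real, measureReal_def, h, ENNReal.toReal_ofReal (hF x)]

namespace ProbabilityTheory.IndepFun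

variable {Ω α β : Type*} [MeasurableSpace Ω] [MeasurableSpace α] [MeasurableSpace β]
  {μ : Measure Ω}

lemma measure_mem_eq_lintegral [IsFiniteMeasure μ] {X : Ω → α} {Y : Ω → β}
    (hXY : IndepFun X Y μ) (hX : Measurable X) (hY : Measurable Y)
    {s : Set (α × β)} (hs : MeasurableSet s) :
    μ {ω | (X ω, Y ω) ∈ s} = ∫⁻ y, μ {ω | (X ω, y) ∈ s} ∂(μ.map Y) := by
  rw [show {ω | (X ω, Y ω) ∈ s} = (fun ω => (X ω, Y ω)) ⁻¹' s from rfl,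
    ← Measure.map_apply (hX.prodMk hY) hs,
    hXY.map_prod_eq_prod_map_map hX.aemeasurable hY.aemeasurable, Measure.prod_apply_symm hs]
  exact lintegral_congr fun y => Measure.map_apply hX (measurable_prodMk_right hs)

lemma ae_ne_of_nullSingletonClass [IsFiniteMeasure μ] [MeasurableEq α] {X Y : Ω → α}
    (hXY : IndepFun X Y μ) (hX : Measurable X) (hY : Measurable Y)
    [NullSingletonClass (μ.map X)] :
    ∀ᵐ ω ∂μ, X ω ≠ Y ω := by
  refine ae_iff.mpr ?_
  simp only [ne_eq, not_not]
  rw [show {ω | X ω = Y ω} = {ω | (X ω, Y ω) ∈ diagonal α} from rfl,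
    hXY.measure_mem_eq_lintegral hX hY measurableSet_diagonal]
  have hatom (y : α) : μ {ω | X ω = y} = 0 := by
    rw [← measure_singleton (μ := μ.map X) y, Measure.map_apply hX (measurableSet_singleton y)]
    rfl
  simp only [mem_diagonal_iff, hatom, lintegral_zero]

lemma measure_le_eq_lintegral [IsFiniteMeasure μ] [LinearOrder α] [TopologicalSpace α]
    [OrderClosedTopology α] [SecondCountableTopology α] [OpensMeasurableSpace α]
    {X Y : Ω → α} (hXY : IndepFun X Y μ) (hX : Measurable X) (hY : Measurable Y) :
    μ {ω | X ω ≤ Y ω} = ∫⁻ y, μ {ω | X ω ≤ y} ∂(μ.map Y) :=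
  hXY.measure_mem_eq_lintegral hX hY (measurableSet_le measurable_fst measurable_snd)

lemma measure_max_le [LinearOrder α] [TopologicalSpace α] [OrderClosedTopology α]
    [OpensMeasurableSpace α] {X Y : Ω → α} (hXY : IndepFun X Y μ) (y : α) :
    μ {ω | max (X ω) (Y ω) ≤ y} = μ {ω | X ω ≤ y} * μ {ω | Y ω ≤ y} := by
  simp only [max_le_iff, ofPred_and]
  exact hXY.measure_inter_preimage_eq_mul _ _ measurableSet_Iic measurableSet_Iic

end ProbabilityTheory.IndepFun

lemma integral_one_sub_rpow {γ : ℝ} (hγ : 0 ≤ γ) :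
    ∫ t in (0 : ℝ)..1, (1 - t ^ γ) = γ / (γ + 1) := by
  rw [intervalIntegral.integral_sub intervalIntegrable_const
      (intervalIntegral.intervalIntegrable_rpow' (by linarith)),
    integral_rpow (Or.inl (by linarith)), intervalIntegral.integral_const, one_rpow,
    zero_rpow (by positivity)]
  field_simp
  ring

lemma lintegral_Ioi_ofReal_one_sub_rpow {γ : ℝ} (hγ : 0 ≤ γ) :
    ∫⁻ t in Ioi 0, ENNReal.ofReal (1 - t ^ γ) = ENNReal.ofReal (γ / (γ + 1)) := by
  have hvanish : ∫⁻ t in Ioi 1, ENNReal.ofReal (1 - t ^ γ) = 0 :=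
    setLIntegral_eq_zero measurableSet_Ioi fun t ht =>
      ENNReal.ofReal_of_nonpos (sub_nonpos.mpr (one_le_rpow (le_of_lt ht) hγ))
  have hcont : Continuous fun t : ℝ => 1 - t ^ γ :=
    continuous_const.sub (continuous_id.rpow_const fun _ => Or.inr hγ)
  have hnonneg : 0 ≤ᵐ[volume.restrict (Ioc 0 1)] fun t : ℝ => 1 - t ^ γ :=
    ae_restrict_of_forall_mem measurableSet_Ioc fun t ht =>
      sub_nonneg.mpr (rpow_le_one ht.1.le ht.2 hγ)
  rw [← Ioc_union_Ioi_eq_Ioi zero_le_one, lintegral_union measurableSet_Ioi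
      (Ioc_disjoint_Ioi le_rfl), hvanish, add_zero,
    ← ofReal_integral_eq_lintegral_ofReal hcont.integrableOn_Ioc hnonneg,
    ← intervalIntegral.integral_of_le zero_le_one, integral_one_sub_rpow hγ]

noncomputable def geCdf (lam α x : ℝ) : ℝ := max 0 (1 - exp (-(lam * x))) ^ α

section GeCdf

variable {lam a b : ℝ}

lemma geCdf_eq_ite (hlam : 0 < lam) (ha : 0 < a) (x : ℝ) :
    geCdf lam a x = if 0 < x then (1 - exp (-(lam * x))) ^ a else 0 := by
  unfold geCdf
  split_ifs with hx
  · rw [max_eq_right (sub_nonneg.mpr (exp_le_one_iff.mpr (by nlinarith)))]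
  · rw [max_eq_left (sub_nonpos.mpr (one_le_exp_iff.mpr (by nlinarith))), zero_rpow ha.ne']

lemma geCdf_nonneg (lam a x : ℝ) : 0 ≤ geCdf lam a x :=
  rpow_nonneg (le_max_left _ _) _

lemma geCdf_lt_one (ha : 0 < a) (x : ℝ) : geCdf lam a x < 1 :=
  rpow_lt_one (le_max_left _ _) (max_lt one_pos (by linarith [exp_pos (-(lam * x))])) ha

lemma continuous_geCdf (ha : 0 ≤ a) : Continuous (geCdf lam a) := by
  unfold geCdf
  fun_prop (disch := exact fun _ => Or.inr ha)

lemma geCdf_add (h : a + b ≠ 0) (x : ℝ) :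
    geCdf lam (a + b) x = geCdf lam a x * geCdf lam b x :=
  rpow_add' (le_max_left _ _) h

lemma exists_setOf_lt_geCdf_eq_Ioi (hlam : 0 < lam) (ha : 0 < a) {t : ℝ} (ht₀ : 0 < t)
    (ht₁ : t < 1) : ∃ c, {y | t < geCdf lam a y} = Ioi c ∧ ∀ b, geCdf lam b c = t ^ (b / a) := by
  set s := t ^ a⁻¹
  have hs₀ : 0 < s := rpow_pos_of_pos ht₀ _
  have hs₁ : s < 1 := rpow_lt_one ht₀.le ht₁ (inv_pos.mpr ha)
  have hts : t = s ^ a := by rw [← rpow_mul ht₀.le, inv_mul_cancel₀ ha.ne', rpow_one]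
  set c := -log (1 - s) / lam
  have hexp : exp (-(lam * c)) = 1 - s := by
    rw [show -(lam * c) = log (1 - s) by simp only [c]; field_simp, exp_log (by linarith)]
  refine ⟨c, ?_, fun b => ?_⟩
  · ext y
    calc t < geCdf lam a y ↔ s < max 0 (1 - exp (-(lam * y))) := by
          rw [hts, geCdf, rpow_lt_rpow_iff hs₀.le (le_max_left _ _) ha]
      _ ↔ exp (-(lam * y)) < exp (-(lam * c)) := by
          rw [lt_max_iff, or_iff_right hs₀.not_gt, hexp]
          constructor <;> intro <;> linarith
      _ ↔ c < y := by rw [exp_lt_exp, neg_lt_neg_iff, mul_lt_mul_iff_right₀ hlam]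
  · rw [geCdf, hexp, sub_sub_cancel, max_eq_right hs₀.le, ← rpow_mul ht₀.le, inv_mul_eq_div]

lemma cdf_map_eq_geCdf {Ω : Type*} [MeasurableSpace Ω] {μ : Measure Ω}
    [IsProbabilityMeasure μ] {U : Ω → ℝ} (hU : Measurable U)
    (h : ∀ x, μ {ω | U ω ≤ x} = ENNReal.ofReal (geCdf lam a x)) :
    cdf (μ.map U) = geCdf lam a :=
  haveI := Measure.isProbabilityMeasure_map (μ := μ) hU.aemeasurable
  cdf_eq_of_measure_Iic (geCdf_nonneg lam a) fun x => by
    rw [Measure.map_apply hU measurableSet_Iic]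
    exact h x

lemma measure_lt_geCdf {ν : Measure ℝ} [IsProbabilityMeasure ν] (hν : cdf ν = geCdf lam b)
    (hlam : 0 < lam) (ha : 0 < a) (hb : 0 ≤ b) {t : ℝ} (ht : 0 < t) :
    ν {y | t < geCdf lam a y} = ENNReal.ofReal (1 - t ^ (b / a)) := by
  rcases lt_or_ge t 1 with ht₁ | ht₁
  · obtain ⟨c, hset, hc⟩ := exists_setOf_lt_geCdf_eq_Ioi hlam ha ht ht₁
    rw [hset, ← compl_Iic, prob_compl_eq_one_sub measurableSet_Iic, ← ofReal_cdf, hν, hc,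
      ENNReal.ofReal_sub _ (rpow_nonneg ht.le _), ENNReal.ofReal_one]
  · have hempty : {y | t < geCdf lam a y} = ∅ :=
      eq_empty_of_forall_notMem fun y hy => (geCdf_lt_one ha y).not_ge (ht₁.trans hy.le)
    rw [hempty, measure_empty, ENNReal.ofReal_of_nonpos
      (sub_nonpos.mpr (one_le_rpow ht₁ (div_nonneg hb ha.le)))]

lemma lintegral_geCdf {ν : Measure ℝ} [IsProbabilityMeasure ν]
    (hν : cdf ν = geCdf lam b) (hlam : 0 < lam) (ha : 0 < a) (hb : 0 ≤ b) :
    ∫⁻ y, ENNReal.ofReal (geCdf lam a y) ∂ν = ENNReal.ofReal (b / (a + b)) := by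
  rw [lintegral_eq_lintegral_meas_lt ν (ae_of_all _ (geCdf_nonneg lam a))
      (continuous_geCdf ha.le).measurable.aemeasurable,
    setLIntegral_congr_fun measurableSet_Ioi fun t ht => measure_lt_geCdf hν hlam ha hb ht,
    lintegral_Ioi_ofReal_one_sub_rpow (div_nonneg hb ha.le)]
  congr 1
  field_simp
  ring

end GeCdf

theorem bvge_prob_equal_coordinates
    {Ω : Type*} [MeasurableSpace Ω] (μ : Measure Ω) [IsProbabilityMeasure μ]
    (U₁ U₂ U₃ : Ω → ℝ) (α₁ α₂ α₃ lam : ℝ)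
    (hα₁ : 0 < α₁) (hα₂ : 0 < α₂) (hα₃ : 0 < α₃) (hlam : 0 < lam)
    (hm₁ : Measurable U₁) (hm₂ : Measurable U₂) (hm₃ : Measurable U₃)
    (hindep : iIndepFun (m := fun _ => (inferInstance : MeasurableSpace ℝ)) ![U₁, U₂, U₃] μ)
    (hcdf₁ : ∀ x : ℝ, μ {ω | U₁ ω ≤ x} =
      ENNReal.ofReal (if 0 < x then (1 - Real.exp (-(lam * x))) ^ α₁ else 0))
    (hcdf₂ : ∀ x : ℝ, μ {ω | U₂ ω ≤ x} =
      ENNReal.ofReal (if 0 < x then (1 - Real.exp (-(lam * x))) ^ α₂ else 0))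
    (hcdf₃ : ∀ x : ℝ, μ {ω | U₃ ω ≤ x} =
      ENNReal.ofReal (if 0 < x then (1 - Real.exp (-(lam * x))) ^ α₃ else 0)) :
    μ {ω | max (U₁ ω) (U₃ ω) = max (U₂ ω) (U₃ ω)} =
      ENNReal.ofReal (α₃ / (α₁ + α₂ + α₃)) := by
  simp only [← geCdf_eq_ite hlam hα₁] at hcdf₁
  simp only [← geCdf_eq_ite hlam hα₂] at hcdf₂
  simp only [← geCdf_eq_ite hlam hα₃] at hcdf₃
  have hmeas (i : Fin 3) : Measurable (![U₁, U₂, U₃] i) := by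
    fin_cases i <;> assumption
  have hindep₁₂ : IndepFun U₁ U₂ μ := by
    simpa using hindep.indepFun (show (0 : Fin 3) ≠ 1 by decide)
  have hindep₃ : IndepFun (fun ω => max (U₁ ω) (U₂ ω)) U₃ μ :=
    (hindep.indepFun_prodMk hmeas 0 1 2 (by decide) (by decide)).comp
      (measurable_fst.max measurable_snd) measurable_id
  have hcdf₁₂ (y : ℝ) :
      μ {ω | max (U₁ ω) (U₂ ω) ≤ y} = ENNReal.ofReal (geCdf lam (α₁ + α₂) y) := by
    rw [hindep₁₂.measure_max_le, hcdf₁, hcdf₂, ← ENNReal.ofReal_mul (geCdf_nonneg _ _ _),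
      geCdf_add (by positivity)]
  have := Measure.isProbabilityMeasure_map (μ := μ) hm₁.aemeasurable
  have := Measure.isProbabilityMeasure_map (μ := μ) hm₃.aemeasurable
  have : NullSingletonClass (μ.map U₁) := nullSingletonClass_of_continuous_cdf <| by
    rw [cdf_map_eq_geCdf hm₁ hcdf₁]
    exact continuous_geCdf hα₁.le
  have hne := hindep₁₂.ae_ne_of_nullSingletonClass hm₁ hm₂
  calc μ {ω | max (U₁ ω) (U₃ ω) = max (U₂ ω) (U₃ ω)}
      = μ {ω | max (U₁ ω) (U₂ ω) ≤ U₃ ω} :=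
        measure_congr (eventuallyEq_set.mpr (hne.mono fun ω h => max_eq_max_iff_of_ne h))
    _ = ∫⁻ y, μ {ω | max (U₁ ω) (U₂ ω) ≤ y} ∂(μ.map U₃) :=
        hindep₃.measure_le_eq_lintegral (hm₁.max hm₂) hm₃
    _ = ∫⁻ y, ENNReal.ofReal (geCdf lam (α₁ + α₂) y) ∂(μ.map U₃) := by simp only [hcdf₁₂]
    _ = ENNReal.ofReal (α₃ / (α₁ + α₂ + α₃)) :=
        lintegral_geCdf (cdf_map_eq_geCdf hm₃ hcdf₃) hlam (by positivity) hα₃.le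
end

section
/- For the BVGE distribution defined by X₁ = max(U₁, U₃), X₂ = max(U₂, U₃) with Uᵢ ~ GE(αᵢ, λ) independent, the conditional probability that U₁ > U₃ given X₁ < X₂ equals α₁/(α₁ + α₃), and the conditional probability that U₁ < U₃ given X₁ < X₂ equals α₃/(α₁ + α₃). -/
/-!
If independent `Uᵢ` have CDFs `H ^ αᵢ` for one continuous CDF `H`, the probability of any order
pattern among them is an integral of a power of `H` against the law of one of them. Since `F(U)`
is uniform on `[0, 1]` when `U` has a continuous CDF `F`, `∫ H ^ b d(H ^ a) = a / (a + b)`. Hence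
`P(max(U₁, U₃) < U₂) = α₂ / (α₁ + α₂ + α₃)` and
`P(U₃ < U₁ < U₂) = α₁ / (α₁ + α₃) - α₁ / (α₁ + α₂ + α₃)`, whose ratio is `α₁ / (α₁ + α₃)`.
-/

open MeasureTheory ProbabilityTheory Set Filter Topology

theorem lintegral_Ioi_one_sub_rpow {p : ℝ} (hp : 0 < p) :
    ∫⁻ t in Ioi 0, ENNReal.ofReal (1 - t ^ p) = ENNReal.ofReal (p / (p + 1)) := by
  have hzero : ∀ t ∈ Ioi (1 : ℝ), ENNReal.ofReal (1 - t ^ p) = 0 := fun t ht => by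
    rw [ENNReal.ofReal_eq_zero, sub_nonpos]
    exact Real.one_le_rpow (le_of_lt ht) hp.le
  have hint : IntervalIntegrable (fun t : ℝ => 1 - t ^ p) volume 0 1 :=
    intervalIntegrable_const.sub (intervalIntegral.intervalIntegrable_rpow' (by linarith))
  rw [← Ioc_union_Ioi_eq_Ioi zero_le_one, lintegral_union measurableSet_Ioi
      (Ioc_disjoint_Ioi le_rfl), setLIntegral_congr_fun measurableSet_Ioi hzero,
    lintegral_zero, add_zero, ← ofReal_integral_eq_lintegral_ofReal hint.1
      ((ae_restrict_iff' measurableSet_Ioc).2 (Eventually.of_forall fun t ht =>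
        sub_nonneg.2 (Real.rpow_le_one ht.1.le ht.2 hp.le))),
    ← intervalIntegral.integral_of_le zero_le_one, intervalIntegral.integral_sub
      intervalIntegrable_const (intervalIntegral.intervalIntegrable_rpow' (by linarith)),
    integral_rpow (Or.inl (by linarith))]
  congr 1
  simp only [intervalIntegral.integral_const, sub_zero, smul_eq_mul, mul_one, Real.one_rpow,
    Real.zero_rpow (by positivity : p + 1 ≠ 0), one_div]
  field_simp
  ring

namespace ProbabilityTheory

section ContinuousCDF

variable {ν : Measure ℝ} [IsProbabilityMeasure ν]

theorem nullSingletonClass_of_continuous_cdf (hF : Continuous (cdf ν)) :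
    NullSingletonClass ν where
  measure_singleton x := by
    rw [← measure_cdf ν, StieltjesFunction.measure_singleton,
      hF.continuousAt.continuousWithinAt.leftLim_eq, sub_self, ENNReal.ofReal_zero]

theorem measure_cdf_le (hF : Continuous (cdf ν)) {s : ℝ} (hs₀ : 0 < s) (hs₁ : s < 1) :
    ν {x | cdf ν x ≤ s} = ENNReal.ofReal s := by
  set S := {x | cdf ν x ≤ s}
  have hS_closed : IsClosed S := isClosed_le hF continuous_const
  have hS_ne : S.Nonempty := ((tendsto_cdf_atBot ν).eventually (ge_mem_nhds hs₀)).exists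
  obtain ⟨y, hy⟩ := eventually_atTop.1 ((tendsto_cdf_atTop ν).eventually (lt_mem_nhds hs₁))
  have hS_bdd : BddAbove S := ⟨y, fun x hx => by
    by_contra! hxy
    exact (hy x hxy.le).not_ge hx⟩
  set c := sSup S
  have hc : c ∈ S := hS_closed.csSup_mem hS_ne hS_bdd
  have hS : S = Iic c := Set.ext fun x =>
    ⟨fun hx => le_csSup hS_bdd hx, fun hx => (monotone_cdf ν hx).trans hc⟩
  -- `cdf ν` exceeds `s` right of `c`, so by continuity `cdf ν c ≥ s`.
  have hFc : cdf ν c = s := by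
    refine le_antisymm hc (ge_of_tendsto
      (hF.tendsto c |>.mono_left (nhdsWithin_le_nhds (s := Ioi c)))
      (eventually_nhdsWithin_of_forall fun x hx => ?_))
    by_contra! hxs
    exact (mem_Ioi.1 hx).not_ge (le_csSup hS_bdd hxs.le)
  rw [hS, ← ofReal_cdf, hFc]

theorem measure_lt_cdf (hF : Continuous (cdf ν)) {s : ℝ} (hs₀ : 0 < s) (hs₁ : s < 1) :
    ν {x | s < cdf ν x} = ENNReal.ofReal (1 - s) := by
  have hmeas : MeasurableSet {x | cdf ν x ≤ s} := measurableSet_le hF.measurable measurable_const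
  have hcompl : {x | s < cdf ν x} = {x | cdf ν x ≤ s}ᶜ := by ext; simp
  rw [hcompl, prob_compl_eq_one_sub hmeas, measure_cdf_le hF hs₀ hs₁,
    ENNReal.ofReal_sub _ hs₀.le, ENNReal.ofReal_one]

theorem lintegral_cdf_rpow (hF : Continuous (cdf ν)) {r : ℝ} (hr : 0 < r) :
    ∫⁻ x, ENNReal.ofReal (cdf ν x ^ r) ∂ν = ENNReal.ofReal (1 / (r + 1)) := by
  have hlevel : ∀ t ∈ Ioi (0 : ℝ),
      ν {x | t < cdf ν x ^ r} = ENNReal.ofReal (1 - t ^ r⁻¹) := by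
    intro t (ht : 0 < t)
    rcases lt_or_ge t 1 with ht₁ | ht₁
    · have hset : {x | t < cdf ν x ^ r} = {x | t ^ r⁻¹ < cdf ν x} := by
        ext x
        exact (Real.rpow_inv_lt_iff_of_pos ht.le (cdf_nonneg ν x) hr).symm
      rw [hset, measure_lt_cdf hF (by positivity) (Real.rpow_lt_one ht.le ht₁ (by positivity))]
    · have hset : {x | t < cdf ν x ^ r} = ∅ :=
        eq_empty_of_forall_notMem fun x hx =>
          (Real.rpow_le_one (cdf_nonneg ν x) (cdf_le_one ν x) hr.le).not_gt (ht₁.trans_lt hx)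
      rw [hset, measure_empty, eq_comm, ENNReal.ofReal_eq_zero, sub_nonpos]
      exact Real.one_le_rpow ht₁ (by positivity)
  rw [lintegral_eq_lintegral_meas_lt ν
      (Eventually.of_forall fun x => Real.rpow_nonneg (cdf_nonneg ν x) r)
      ((monotone_cdf ν).measurable.pow_const r).aemeasurable,
    setLIntegral_congr_fun measurableSet_Ioi hlevel, lintegral_Ioi_one_sub_rpow (by positivity)]
  congr 1
  field_simp
  ring

end ContinuousCDF

theorem IndepFun.measure_mem_and_mem {Ω α β γ : Type*} [MeasurableSpace Ω] [MeasurableSpace α]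
    [MeasurableSpace β] [MeasurableSpace γ] {μ : Measure Ω} [IsFiniteMeasure μ]
    {X : Ω → α} {Y : Ω → β} {Z : Ω → γ} (hX : Measurable X) (hY : Measurable Y)
    (hZ : Measurable Z) (hXYZ : IndepFun X (fun ω => (Y ω, Z ω)) μ) (hYZ : IndepFun Y Z μ)
    {A : α → Set β} {B : α → Set γ}
    (hAB : MeasurableSet {p : α × β × γ | p.2.1 ∈ A p.1 ∧ p.2.2 ∈ B p.1}) :
    μ {ω | Y ω ∈ A (X ω) ∧ Z ω ∈ B (X ω)} = ∫⁻ x, μ.map Y (A x) * μ.map Z (B x) ∂μ.map X := by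
  have hYZ_map : μ.map (fun ω => (Y ω, Z ω)) = (μ.map Y).prod (μ.map Z) :=
    (indepFun_iff_map_prod_eq_prod_map_map hY.aemeasurable hZ.aemeasurable).1 hYZ
  have hXYZ_map :
      μ.map (fun ω => (X ω, Y ω, Z ω)) = (μ.map X).prod ((μ.map Y).prod (μ.map Z)) := by
    rw [← hYZ_map]
    exact (indepFun_iff_map_prod_eq_prod_map_map hX.aemeasurable
      (hY.prodMk hZ).aemeasurable).1 hXYZ
  have hpreimage : {ω | Y ω ∈ A (X ω) ∧ Z ω ∈ B (X ω)} =
      (fun ω => (X ω, Y ω, Z ω)) ⁻¹' {p | p.2.1 ∈ A p.1 ∧ p.2.2 ∈ B p.1} := rfl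
  rw [hpreimage, ← Measure.map_apply (hX.prodMk (hY.prodMk hZ)) hAB, hXYZ_map,
    Measure.prod_apply hAB]
  exact lintegral_congr fun x => Measure.prod_prod (A x) (B x)

section PowerFamily

variable {H : ℝ → ℝ} {a : ℝ} {ν : Measure ℝ}

theorem continuous_cdf_of_eq_rpow (hH : Continuous H) (ha : 0 ≤ a)
    (hν : ∀ x, cdf ν x = H x ^ a) : Continuous (cdf ν) := by
  simpa only [funext hν] using hH.rpow_const fun _ => Or.inr ha

variable [IsProbabilityMeasure ν]

theorem measure_Iio_of_cdf_eq_rpow (hH : Continuous H) (ha : 0 < a)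
    (hν : ∀ x, cdf ν x = H x ^ a) (x : ℝ) : ν (Iio x) = ENNReal.ofReal (H x ^ a) := by
  have := nullSingletonClass_of_continuous_cdf (continuous_cdf_of_eq_rpow hH ha.le hν)
  rw [measure_congr Iio_ae_eq_Iic, ← ofReal_cdf, hν]

theorem measure_Ioi_of_cdf_eq_rpow (hν : ∀ x, cdf ν x = H x ^ a) (x : ℝ) :
    ν (Ioi x) = ENNReal.ofReal (1 - H x ^ a) := by
  rw [← compl_Iic, prob_compl_eq_one_sub measurableSet_Iic, ← ofReal_cdf, ← ENNReal.ofReal_one,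
    ← ENNReal.ofReal_sub _ (cdf_nonneg ν x), hν]

theorem lintegral_rpow_of_cdf_eq_rpow (hH : Continuous H) (hH₀ : ∀ x, 0 ≤ H x) (ha : 0 < a)
    (hν : ∀ x, cdf ν x = H x ^ a) {b : ℝ} (hb : 0 < b) :
    ∫⁻ x, ENNReal.ofReal (H x ^ b) ∂ν = ENNReal.ofReal (a / (a + b)) := by
  have hpow : ∀ x, H x ^ b = cdf ν x ^ (b / a) := fun x => by
    rw [hν, ← Real.rpow_mul (hH₀ x), mul_div_cancel₀ _ ha.ne']
  simp_rw [hpow]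
  rw [lintegral_cdf_rpow (continuous_cdf_of_eq_rpow hH ha.le hν) (div_pos hb ha)]
  congr 1
  field_simp
  ring

variable {Ω ι : Type*} [MeasurableSpace Ω] {μ : Measure Ω} [IsProbabilityMeasure μ]
  {U : ι → Ω → ℝ} {α : ι → ℝ}

theorem iIndepFun.measure_lt_and_lt_of_cdf_eq_rpow (hindep : iIndepFun U μ)
    (hU : ∀ i, Measurable (U i)) (hH : Continuous H) (hH₀ : ∀ x, 0 ≤ H x)
    (hα : ∀ i, 0 < α i) (hcdf : ∀ i x, cdf (μ.map (U i)) x = H x ^ α i)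
    {i j k : ι} (hij : i ≠ j) (hik : i ≠ k) (hjk : j ≠ k) :
    μ {ω | U j ω < U i ω ∧ U k ω < U i ω} = ENNReal.ofReal (α i / (α i + (α j + α k))) := by
  have (i : ι) : IsProbabilityMeasure (μ.map (U i)) :=
    Measure.isProbabilityMeasure_map (hU i).aemeasurable
  have hprod (x : ℝ) : μ.map (U j) (Iio x) * μ.map (U k) (Iio x) =
      ENNReal.ofReal (H x ^ (α j + α k)) := by
    rw [measure_Iio_of_cdf_eq_rpow hH (hα j) (hcdf j),
      measure_Iio_of_cdf_eq_rpow hH (hα k) (hcdf k),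
      ← ENNReal.ofReal_mul (Real.rpow_nonneg (hH₀ x) _),
      Real.rpow_add' (hH₀ x) (by linarith [hα j, hα k])]
  calc μ {ω | U j ω < U i ω ∧ U k ω < U i ω}
      = ∫⁻ x, μ.map (U j) (Iio x) * μ.map (U k) (Iio x) ∂μ.map (U i) :=
        (hindep.indepFun_prodMk hU j k i hij.symm hik.symm).symm.measure_mem_and_mem
          (A := Iio) (B := Iio) (hU i) (hU j) (hU k) (hindep.indepFun hjk)
          ((measurableSet_lt (by fun_prop) (by fun_prop)).inter
            (measurableSet_lt (by fun_prop) (by fun_prop)))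
    _ = ∫⁻ x, ENNReal.ofReal (H x ^ (α j + α k)) ∂μ.map (U i) := lintegral_congr hprod
    _ = _ := lintegral_rpow_of_cdf_eq_rpow hH hH₀ (hα i) (hcdf i) (by linarith [hα j, hα k])

theorem iIndepFun.measure_lt_lt_of_cdf_eq_rpow (hindep : iIndepFun U μ)
    (hU : ∀ i, Measurable (U i)) (hH : Continuous H) (hH₀ : ∀ x, 0 ≤ H x)
    (hα : ∀ i, 0 < α i) (hcdf : ∀ i x, cdf (μ.map (U i)) x = H x ^ α i)
    {i j k : ι} (hij : i ≠ j) (hik : i ≠ k) (hjk : j ≠ k) :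
    μ {ω | U j ω < U i ω ∧ U i ω < U k ω} =
      ENNReal.ofReal (α i / (α i + α j) - α i / (α i + (α j + α k))) := by
  have (i : ι) : IsProbabilityMeasure (μ.map (U i)) :=
    Measure.isProbabilityMeasure_map (hU i).aemeasurable
  have hjk_pos : 0 < α j + α k := by linarith [hα j, hα k]
  have hprod (x : ℝ) : μ.map (U j) (Iio x) * μ.map (U k) (Ioi x) =
      ENNReal.ofReal (H x ^ α j) - ENNReal.ofReal (H x ^ (α j + α k)) := by
    rw [measure_Iio_of_cdf_eq_rpow hH (hα j) (hcdf j), measure_Ioi_of_cdf_eq_rpow (hcdf k),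
      ← ENNReal.ofReal_mul (Real.rpow_nonneg (hH₀ x) _),
      ← ENNReal.ofReal_sub _ (Real.rpow_nonneg (hH₀ x) _), Real.rpow_add' (hH₀ x) hjk_pos.ne',
      mul_one_sub]
  have hle (x : ℝ) : ENNReal.ofReal (H x ^ (α j + α k)) ≤ ENNReal.ofReal (H x ^ α j) := by
    rw [Real.rpow_add' (hH₀ x) hjk_pos.ne', ← hcdf k]
    exact ENNReal.ofReal_le_ofReal
      (mul_le_of_le_one_right (Real.rpow_nonneg (hH₀ x) _) (cdf_le_one _ x))
  have hj := lintegral_rpow_of_cdf_eq_rpow hH hH₀ (hα i) (hcdf i) (hα j)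
  have hjk_int := lintegral_rpow_of_cdf_eq_rpow hH hH₀ (hα i) (hcdf i) hjk_pos
  calc μ {ω | U j ω < U i ω ∧ U i ω < U k ω}
      = ∫⁻ x, μ.map (U j) (Iio x) * μ.map (U k) (Ioi x) ∂μ.map (U i) :=
        (hindep.indepFun_prodMk hU j k i hij.symm hik.symm).symm.measure_mem_and_mem
          (A := Iio) (B := Ioi) (hU i) (hU j) (hU k) (hindep.indepFun hjk)
          ((measurableSet_lt (by fun_prop) (by fun_prop)).inter
            (measurableSet_lt (by fun_prop) (by fun_prop)))
    _ = ∫⁻ x, ENNReal.ofReal (H x ^ α j) - ENNReal.ofReal (H x ^ (α j + α k)) ∂μ.map (U i) :=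
        lintegral_congr hprod
    _ = _ := by
      rw [lintegral_sub (by fun_prop) (hjk_int ▸ ENNReal.ofReal_ne_top)
        (Eventually.of_forall hle), hj, hjk_int,
        ENNReal.ofReal_sub _ (by have := hα i; positivity)]

end PowerFamily

theorem cdf_map_eq {Ω : Type*} [MeasurableSpace Ω] {μ : Measure Ω} [IsProbabilityMeasure μ]
    {U : Ω → ℝ} (hU : Measurable U) {F : ℝ → ℝ} (hF₀ : ∀ x, 0 ≤ F x)
    (hF : ∀ x, μ {ω | U ω ≤ x} = ENNReal.ofReal (F x)) (x : ℝ) : cdf (μ.map U) x = F x := by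
  have := Measure.isProbabilityMeasure_map (μ := μ) hU.aemeasurable
  rw [cdf_eq_real, measureReal_def, Measure.map_apply hU measurableSet_Iic]
  exact (congrArg ENNReal.toReal (hF x)).trans (ENNReal.toReal_ofReal (hF₀ x))

end ProbabilityTheory

section Order

variable {α : Type*} [LinearOrder α] {a b c : α}

theorem lt_and_max_lt_max_iff : c < a ∧ max a c < max b c ↔ c < a ∧ a < b := by
  rw [max_lt_max_left_iff]
  exact ⟨fun h => ⟨h.1, h.2.1⟩, fun h => ⟨h.1, h.2, h.1.trans h.2⟩⟩

theorem lt_and_max_lt_max_iff' : a < c ∧ max a c < max b c ↔ a < c ∧ c < b := by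
  rw [max_lt_max_left_iff]
  exact ⟨fun h => ⟨h.1, h.2.2⟩, fun h => ⟨h.1, h.1.trans h.2, h.2⟩⟩

end Order

-- The exponential CDF written as `max (1 - e^{-λx}) 0` is continuous and nonnegative, so its real
-- powers are the GE CDFs (a negative base would not give `0 ^ α = 0`).
theorem ite_one_sub_exp_rpow_eq {lam α : ℝ} (hlam : 0 ≤ lam) (hα : 0 < α) (x : ℝ) :
    (if 0 < x then (1 - Real.exp (-(lam * x))) ^ α else 0) =
      max (1 - Real.exp (-(lam * x))) 0 ^ α := by
  split_ifs with hx
  · rw [max_eq_left (sub_nonneg.2 (Real.exp_le_one_iff.2 (by nlinarith)))]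
  · rw [max_eq_right (sub_nonpos.2 (Real.one_le_exp_iff.2 (by nlinarith))),
      Real.zero_rpow hα.ne']

theorem cdf_map_eq_max_one_sub_exp_rpow {Ω : Type*} [MeasurableSpace Ω] {μ : Measure Ω}
    [IsProbabilityMeasure μ] {U : Ω → ℝ} (hU : Measurable U) {lam α : ℝ} (hlam : 0 ≤ lam)
    (hα : 0 < α) (hcdf : ∀ x : ℝ, μ {ω | U ω ≤ x} =
      ENNReal.ofReal (if 0 < x then (1 - Real.exp (-(lam * x))) ^ α else 0)) (x : ℝ) :
    cdf (μ.map U) x = max (1 - Real.exp (-(lam * x))) 0 ^ α :=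
  cdf_map_eq hU (F := fun x => max (1 - Real.exp (-(lam * x))) 0 ^ α) (fun _ => by positivity)
    (fun x => by rw [hcdf, ite_one_sub_exp_rpow_eq hlam hα]) x

theorem bvge_fractional_masses
    {Ω : Type*} [MeasurableSpace Ω] (μ : Measure Ω) [IsProbabilityMeasure μ]
    (U₁ U₂ U₃ : Ω → ℝ) (α₁ α₂ α₃ lam : ℝ)
    (hα₁ : 0 < α₁) (hα₂ : 0 < α₂) (hα₃ : 0 < α₃) (hlam : 0 < lam)
    (hm₁ : Measurable U₁) (hm₂ : Measurable U₂) (hm₃ : Measurable U₃)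
    (hindep : iIndepFun ![U₁, U₂, U₃] μ)
    (hcdf₁ : ∀ x : ℝ, μ {ω | U₁ ω ≤ x} =
      ENNReal.ofReal (if 0 < x then (1 - Real.exp (-(lam * x))) ^ α₁ else 0))
    (hcdf₂ : ∀ x : ℝ, μ {ω | U₂ ω ≤ x} =
      ENNReal.ofReal (if 0 < x then (1 - Real.exp (-(lam * x))) ^ α₂ else 0))
    (hcdf₃ : ∀ x : ℝ, μ {ω | U₃ ω ≤ x} =
      ENNReal.ofReal (if 0 < x then (1 - Real.exp (-(lam * x))) ^ α₃ else 0)) :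
    μ {ω | U₃ ω < U₁ ω ∧ max (U₁ ω) (U₃ ω) < max (U₂ ω) (U₃ ω)} =
      ENNReal.ofReal (α₁ / (α₁ + α₃)) *
        μ {ω | max (U₁ ω) (U₃ ω) < max (U₂ ω) (U₃ ω)} ∧
    μ {ω | U₁ ω < U₃ ω ∧ max (U₁ ω) (U₃ ω) < max (U₂ ω) (U₃ ω)} =
      ENNReal.ofReal (α₃ / (α₁ + α₃)) *
        μ {ω | max (U₁ ω) (U₃ ω) < max (U₂ ω) (U₃ ω)} := by
  have hU : ∀ i, Measurable (![U₁, U₂, U₃] i) := fun i => by fin_cases i <;> assumption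
  have hα : ∀ i, 0 < ![α₁, α₂, α₃] i := fun i => by fin_cases i <;> assumption
  have hcdf : ∀ i x, cdf (μ.map (![U₁, U₂, U₃] i)) x =
      max (1 - Real.exp (-(lam * x))) 0 ^ ![α₁, α₂, α₃] i := by
    intro i
    fin_cases i
    exacts [cdf_map_eq_max_one_sub_exp_rpow hm₁ hlam.le hα₁ hcdf₁,
      cdf_map_eq_max_one_sub_exp_rpow hm₂ hlam.le hα₂ hcdf₂,
      cdf_map_eq_max_one_sub_exp_rpow hm₃ hlam.le hα₃ hcdf₃]
  have hB : μ {ω | max (U₁ ω) (U₃ ω) < max (U₂ ω) (U₃ ω)} =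
      ENNReal.ofReal (α₂ / (α₂ + (α₁ + α₃))) := by
    simp only [max_lt_max_left_iff]
    exact hindep.measure_lt_and_lt_of_cdf_eq_rpow hU (by fun_prop) (fun _ => le_max_right _ _)
      hα hcdf (i := 1) (j := 0) (k := 2) (by decide) (by decide) (by decide)
  have hA₁ : μ {ω | U₃ ω < U₁ ω ∧ max (U₁ ω) (U₃ ω) < max (U₂ ω) (U₃ ω)} =
      ENNReal.ofReal (α₁ / (α₁ + α₃) - α₁ / (α₁ + (α₃ + α₂))) := by
    simp only [lt_and_max_lt_max_iff]
    exact hindep.measure_lt_lt_of_cdf_eq_rpow hU (by fun_prop) (fun _ => le_max_right _ _)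
      hα hcdf (i := 0) (j := 2) (k := 1) (by decide) (by decide) (by decide)
  have hA₂ : μ {ω | U₁ ω < U₃ ω ∧ max (U₁ ω) (U₃ ω) < max (U₂ ω) (U₃ ω)} =
      ENNReal.ofReal (α₃ / (α₃ + α₁) - α₃ / (α₃ + (α₁ + α₂))) := by
    simp only [lt_and_max_lt_max_iff']
    exact hindep.measure_lt_lt_of_cdf_eq_rpow hU (by fun_prop) (fun _ => le_max_right _ _)
      hα hcdf (i := 2) (j := 0) (k := 1) (by decide) (by decide) (by decide)
  rw [hA₁, hA₂, hB, ← ENNReal.ofReal_mul (by positivity), ← ENNReal.ofReal_mul (by positivity)]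
  constructor <;> congr 1 <;> field_simp <;> ring
end
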